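/- For all integers n ≥ m ≥ 2, one has (n+1)^n / n! ≠ (n-m+2)^(n-m+1) · 2^(m-1) / (n-m+1)!. -/
import Mathlib

open Finset in
lemma stmt2_key (n : ℕ) (hn : 1 ≤ n) : 2 * (n+1)^(n+1) < (n+2)^(n+1) := by
  have hexp : (n+2)^(n+1) = ∑ i ∈ range (n+2), (n+1)^i * Nat.choose (n+1) i := by
    have := add_pow (n+1) 1 (n+1)
    simpa using this
  have hsub : ({0, n, n+1} : Finset ℕ) ⊆ range (n+2) := by
    intro x hx; simp at hx; simp; omega
  have hle : ∑ i ∈ ({0, n, n+1} : Finset ℕ), (n+1)^i * Nat.choose (n+1) i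
      ≤ ∑ i ∈ range (n+2), (n+1)^i * Nat.choose (n+1) i :=
    Finset.sum_le_sum_of_subset hsub
  have h0n : (0:ℕ) ≠ n := by omega
  have h0n1 : (0:ℕ) ≠ n+1 := by omega
  have hnn1 : n ≠ n+1 := by omega
  rw [Finset.sum_insert (by simp [h0n, h0n1]),
      Finset.sum_insert (by simp [hnn1]), Finset.sum_singleton] at hle
  simp [Nat.choose_self, Nat.choose_succ_self_right, pow_succ] at hle
  rw [hexp]
  calc 2 * (n+1)^(n+1) < 1 + ((n+1)^n * (n+1) + (n+1)^(n+1)) := by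
        rw [pow_succ]; omega
    _ ≤ _ := hle

noncomputable def stmt2_f (j : ℕ) : ℝ := ((j:ℝ)+1)^j / (2^j * j.factorial)

lemma stmt2_step (j : ℕ) (hj : 1 ≤ j) : stmt2_f j < stmt2_f (j+1) := by
  have hnat : (j+1)^j * (2^(j+1) * (j+1).factorial) < (j+2)^(j+1) * (2^j * j.factorial) := by
    have hk := stmt2_key j hj
    calc (j+1)^j * (2^(j+1) * (j+1).factorial)
        = (2 * (j+1)^(j+1)) * (2^j * j.factorial) := by
          rw [Nat.factorial_succ]; ring
      _ < (j+2)^(j+1) * (2^j * j.factorial) := by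
          apply Nat.mul_lt_mul_of_lt_of_le hk le_rfl
          positivity
  unfold stmt2_f
  rw [div_lt_div_iff₀ (by positivity) (by positivity)]
  push_cast
  have := (Nat.cast_lt (α := ℝ)).2 hnat
  push_cast at this
  convert this using 2 <;> ring

lemma stmt2_mono (k n : ℕ) (hk : 1 ≤ k) (h : k < n) : stmt2_f k < stmt2_f n := by
  induction n with
  | zero => omega
  | succ n ih =>
    rcases Nat.lt_or_ge k n with h' | h'
    · exact (ih h').trans (stmt2_step n (by omega))
    · have : k = n := by omega
      subst this
      exact stmt2_step k hk

/-- For all integers `n ≥ m ≥ 2`,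
    `(n+1)^n / n! ≠ (n-m+2)^(n-m+1) · 2^(m-1) / (n-m+1)!`. -/
theorem stmt_2 (n m : ℕ) (hm : 2 ≤ m) (hmn : m ≤ n) :
    (((n : ℝ) + 1) ^ n) / (Nat.factorial n) ≠
      (((n - m + 2 : ℕ) : ℝ) ^ (n - m + 1)) * 2 ^ (m - 1) /
        (Nat.factorial (n - m + 1)) := by
  intro h
  set k := n - m + 1 with hkdef
  have hk1 : 1 ≤ k := by omega
  have hkn : k < n := by omega
  rw [show (n - m + 2 : ℕ) = k + 1 from by omega, Nat.cast_add, Nat.cast_one] at h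
  have hmono := stmt2_mono k n hk1 hkn
  unfold stmt2_f at hmono
  have h2 : (2:ℝ)^n = 2^(m-1) * 2^k := by
    rw [← pow_add]; congr 1; omega
  have hfn : ((n:ℝ)+1)^n / (2^n * n.factorial)
      = ((k:ℝ)+1)^k / (2^k * k.factorial) := by
    rw [div_eq_div_iff (by positivity) (by positivity)] at h
    rw [h2, div_eq_div_iff (by positivity) (by positivity)]
    linear_combination (2:ℝ)^k * h
  rw [hfn] at hmono
  exact lt_irrefl _ hmono
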